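/- arXiv:2408.08248 — 5 statements merged into one kernel-verified Lean document; each statement's English description precedes it below -/
import Mathlib

section
/- Let α_1,...,α_{n+1} be exchangeable real-valued random variables. Then for any ε ∈ (0,1), P( |{i ∈ {1,...,n+1} : α_i ≥ α_{n+1}}| / (n+1) > ε ) ≥ 1 - ε. -/
set_option maxRecDepth 8000

open MeasureTheory ProbabilityTheory Finset
open scoped ENNReal NNReal

private lemma conformal_counting {m : ℕ} (x : Fin m → ℝ) (k : ℕ) :
    (univ.filter fun j => (univ.filter fun i => x j ≤ x i).card ≤ k).card ≤ k := by
  set S := univ.filter fun j => (univ.filter fun i => x j ≤ x i).card ≤ k with hS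
  rcases S.eq_empty_or_nonempty with h | h
  · simp [h]
  · obtain ⟨j₀, hj₀S, hmin⟩ := S.exists_min_image x h
    calc S.card ≤ (univ.filter fun i => x j₀ ≤ x i).card := by
          apply Finset.card_le_card
          intro j hj
          simp only [Finset.mem_filter, Finset.mem_univ, true_and]
          exact hmin j hj
      _ ≤ k := (Finset.mem_filter.mp hj₀S).2

/-- Conformal validity lemma: for exchangeable scores, the conformal p-value is
super-uniform. -/
theorem conformal_pvalue_superuniform
    {Ω : Type*} [MeasurableSpace Ω] (P : Measure Ω) [IsProbabilityMeasure P]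
    (n : ℕ) (α : Fin (n + 1) → Ω → ℝ) (hmeas : ∀ i, Measurable (α i))
    (hexch : ∀ σ : Equiv.Perm (Fin (n + 1)),
      Measure.map (fun ω i => α (σ i) ω) P = Measure.map (fun ω i => α i ω) P)
    (ε : ℝ) (hε0 : 0 < ε) (hε1 : ε < 1) :
    1 - ENNReal.ofReal ε ≤
      P {ω | (ε : ℝ) <
        ((Finset.univ.filter (fun i => α (Fin.last n) ω ≤ α i ω)).card : ℝ) / (n + 1)} := by
  set k : ℕ := ⌊ε * (n + 1)⌋₊ with hk
  -- counting random variables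
  set N : Fin (n + 1) → Ω → ℕ := fun j ω => (univ.filter fun i => α j ω ≤ α i ω).card with hN
  have hNmeas : ∀ j, Measurable fun ω => N j ω := by
    intro j
    have h : (fun ω => N j ω) = fun ω => ∑ i, if α j ω ≤ α i ω then 1 else 0 := by
      funext ω; exact Finset.card_filter _ _
    rw [h]
    exact Finset.measurable_sum _ fun i _ =>
      Measurable.ite (measurableSet_le (hmeas j) (hmeas i)) measurable_const measurable_const
  -- events
  set A : Fin (n + 1) → Set Ω := fun j => {ω | N j ω ≤ k} with hA
  have hAmeas : ∀ j, MeasurableSet (A j) := fun j => (hNmeas j) measurableSet_Iic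
  -- the set in the product space
  set B : Set (Fin (n + 1) → ℝ) :=
    {x | (univ.filter fun i => x (Fin.last n) ≤ x i).card ≤ k} with hB
  have hBmeas : MeasurableSet B := by
    have hf : Measurable fun x : Fin (n + 1) → ℝ =>
        (univ.filter fun i => x (Fin.last n) ≤ x i).card := by
      have h : (fun x : Fin (n + 1) → ℝ => (univ.filter fun i => x (Fin.last n) ≤ x i).card)
          = fun x => ∑ i, if x (Fin.last n) ≤ x i then 1 else 0 := by
        funext x; exact Finset.card_filter _ _
      rw [h]
      exact Finset.measurable_sum _ fun i _ =>
        Measurable.ite (measurableSet_le (measurable_pi_apply _) (measurable_pi_apply _))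
          measurable_const measurable_const
    exact hf measurableSet_Iic
  have hvec : Measurable fun ω => fun i => α i ω := measurable_pi_lambda _ hmeas
  -- all events have the same probability
  have hPeq : ∀ j, P (A j) = P (A (Fin.last n)) := by
    intro j
    set σ : Equiv.Perm (Fin (n + 1)) := Equiv.swap j (Fin.last n) with hσ
    have hσvec : Measurable fun ω => fun i => α (σ i) ω :=
      measurable_pi_lambda _ fun i => hmeas (σ i)
    have h1 : A j = (fun ω => fun i => α (σ i) ω) ⁻¹' B := by
      ext ω
      simp only [hA, hB, Set.mem_setOf_eq, Set.mem_preimage, hN]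
      have key : (univ.filter fun i => α (σ (Fin.last n)) ω ≤ α (σ i) ω).card
          = (univ.filter fun i => α j ω ≤ α i ω).card := by
        rw [Finset.card_filter, Finset.card_filter]
        simp only [hσ, Equiv.swap_apply_right]
        exact Equiv.sum_comp (Equiv.swap j (Fin.last n))
          (fun i => if α j ω ≤ α i ω then 1 else 0)
      rw [key]
    have h2 : A (Fin.last n) = (fun ω => fun i => α i ω) ⁻¹' B := rfl
    rw [h1, h2, ← Measure.map_apply hσvec hBmeas, ← Measure.map_apply hvec hBmeas, hexch σ]
  -- summing indicators: (n+1) * P(A last) ≤ k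
  have hsum : (↑(n + 1) : ℝ≥0∞) * P (A (Fin.last n)) ≤ (k : ℝ≥0∞) := by
    have e1 : (↑(n + 1) : ℝ≥0∞) * P (A (Fin.last n)) = ∑ j : Fin (n + 1), P (A j) := by
      simp [hPeq, Finset.sum_const, mul_comm]
    rw [e1]
    calc ∑ j : Fin (n + 1), P (A j)
        = ∫⁻ ω, ∑ j : Fin (n + 1), (A j).indicator 1 ω ∂P := by
          rw [lintegral_finset_sum _ fun j _ => measurable_one.indicator (hAmeas j)]
          exact Finset.sum_congr rfl fun j _ => (lintegral_indicator_one (hAmeas j)).symm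
      _ ≤ ∫⁻ _, (k : ℝ≥0∞) ∂P := by
          apply lintegral_mono
          intro ω
          dsimp only
          have h1 : ∑ j : Fin (n + 1), (A j).indicator (1 : Ω → ℝ≥0∞) ω
              = ((univ.filter fun j => N j ω ≤ k).card : ℝ≥0∞) := by
            rw [Finset.card_filter]
            push_cast
            refine Finset.sum_congr rfl fun j _ => ?_
            by_cases h : N j ω ≤ k
            · simp [Set.indicator_apply, hA, Set.mem_setOf_eq, h]
            · simp [Set.indicator_apply, hA, Set.mem_setOf_eq, h]
          rw [h1]
          exact_mod_cast Nat.cast_le.mpr (conformal_counting (fun i => α i ω) k)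
      _ = (k : ℝ≥0∞) := by simp
  -- k ≤ (n+1) * ε
  have hklect : (k : ℝ≥0∞) ≤ (↑(n + 1) : ℝ≥0∞) * ENNReal.ofReal ε := by
    have h1 : (k : ℝ) ≤ ε * (n + 1) := Nat.floor_le (by positivity)
    calc (k : ℝ≥0∞) = ENNReal.ofReal (k : ℝ) := by rw [ENNReal.ofReal_natCast]
      _ ≤ ENNReal.ofReal (ε * (n + 1)) := ENNReal.ofReal_le_ofReal h1
      _ = (↑(n + 1) : ℝ≥0∞) * ENNReal.ofReal ε := by
          rw [ENNReal.ofReal_mul hε0.le, mul_comm]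
          congr 1
          rw [show ((n : ℝ) + 1) = ((n + 1 : ℕ) : ℝ) by push_cast; ring, ENNReal.ofReal_natCast]
  have hPlast : P (A (Fin.last n)) ≤ ENNReal.ofReal ε := by
    have h := hsum.trans hklect
    exact (ENNReal.mul_le_mul_iff_right (by positivity) (by simp)).mp h
  -- final step via complement
  set E : Set Ω := {ω | (ε : ℝ) <
    ((univ.filter fun i => α (Fin.last n) ω ≤ α i ω).card : ℝ) / (n + 1)} with hE
  have hEmeas : MeasurableSet E := by
    have hm : Measurable fun ω => ((N (Fin.last n) ω : ℝ)) / (n + 1) :=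
      (measurable_from_top.comp (hNmeas (Fin.last n))).div_const _
    exact measurableSet_lt measurable_const hm
  have hEc : Eᶜ = A (Fin.last n) := by
    ext ω
    simp only [hE, Set.mem_compl_iff, Set.mem_setOf_eq, not_lt, hA, hN]
    rw [div_le_iff₀ (by positivity)]
    constructor
    · intro h
      exact Nat.le_floor (by push_cast at h ⊢; linarith)
    · intro h
      have h2 : ((univ.filter fun i => α (Fin.last n) ω ≤ α i ω).card : ℝ) ≤ ε * (n + 1) :=
        (Nat.le_floor_iff (by positivity)).mp h
      linarith
  rw [tsub_le_iff_right]
  calc (1 : ℝ≥0∞) = P E + P Eᶜ := (prob_add_prob_compl hEmeas).symm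
    _ ≤ P E + ENNReal.ofReal ε := by
        gcongr
        rw [hEc]; exact hPlast
end

section
/- Let α_1,...,α_{n+1} be exchangeable real-valued random variables with no ties almost surely. Then for any ε ∈ (0,1), P( |{i : α_i ≥ α_{n+1}}|/(n+1) > ε ) ≤ 1 - ε + 1/(n+1). -/
/-!
With no ties, the ranks `#{i | v j ≤ v i}` of the coordinates of `v` are distinct numbers in
`1, …, n + 1`, so at most `#{k ≤ n + 1 | ε (n + 1) < k} ≤ (1 - ε) (n + 1) + 1` coordinates have a
rank in the p-value event. By exchangeability each coordinate lies in it with the same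
probability, so averaging over the coordinates bounds that probability by `1 - ε + 1 / (n + 1)`.
-/

open MeasureTheory ProbabilityTheory Finset
open scoped ENNReal

namespace Conformal

variable {ι : Type*} [Fintype ι]

def rank {α : Type*} [LinearOrder α] (v : ι → α) (j : ι) : ℕ := #{i | v j ≤ v i}

section Rank

variable {α : Type*} [LinearOrder α]

lemma rank_comp_perm (v : ι → α) (σ : Equiv.Perm ι) (j : ι) :
    rank (v ∘ σ) j = rank v (σ j) := by
  simp only [rank, card_filter, Function.comp_apply]
  exact Equiv.sum_comp σ (fun i => if v (σ j) ≤ v i then 1 else 0)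

lemma rank_mem_Icc (v : ι → α) (j : ι) : rank v j ∈ Icc 1 (Fintype.card ι) :=
  mem_Icc.2 ⟨card_pos.2 ⟨j, by simp⟩, card_filter_le _ _⟩

lemma rank_lt_rank_of_lt (v : ι → α) {a b : ι} (h : v a < v b) : rank v b < rank v a :=
  card_lt_card ⟨monotone_filter_right _ fun i _ hi => h.le.trans hi,
    fun hsub => (mem_filter.1 (hsub (by simp : a ∈ ({i | v a ≤ v i} : Finset ι)))).2.not_gt h⟩

lemma rank_injective {v : ι → α} (hv : Function.Injective v) : Function.Injective (rank v) := by
  intro a b hab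
  by_contra hne
  rcases (hv.ne hne).lt_or_gt with h | h
  · exact (rank_lt_rank_of_lt v h).ne' hab
  · exact (rank_lt_rank_of_lt v h).ne hab

lemma card_filter_rank_le {v : ι → α} (hv : Function.Injective v) (p : ℕ → Prop)
    [DecidablePred p] : #{j | p (rank v j)} ≤ #{k ∈ Icc 1 (Fintype.card ι) | p k} :=
  card_le_card_of_injOn (rank v)
    (fun j hj => mem_filter.2 ⟨rank_mem_Icc v j, (mem_filter.1 hj).2⟩)
    (rank_injective hv).injOn

end Rank

lemma measurable_rank (j : ι) : Measurable fun v : ι → ℝ => rank v j := by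
  simp only [rank, card_filter]
  exact Finset.measurable_sum _ fun i _ =>
    Measurable.ite (measurableSet_le (measurable_pi_apply j) (measurable_pi_apply i))
      measurable_const measurable_const

lemma measurableSet_rank (j : ι) (p : ℕ → Prop) : MeasurableSet {v : ι → ℝ | p (rank v j)} :=
  measurable_rank j MeasurableSet.of_discrete

section Exchangeable

variable {μ : Measure (ι → ℝ)}

lemma ae_injective_of_ties_null (hties : ∀ i j, i ≠ j → μ {v | v i = v j} = 0) :
    ∀ᵐ v ∂μ, Function.Injective v := by
  have hne : ∀ i j, ∀ᵐ v ∂μ, i ≠ j → v i ≠ v j := fun i j => by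
    by_cases hij : i = j
    · exact Filter.Eventually.of_forall fun _ h => absurd hij h
    · exact ae_iff.2 (by simpa [hij] using hties i j hij)
  filter_upwards [ae_all_iff.2 fun i => ae_all_iff.2 (hne i)] with v hv i j
  exact not_imp_not.1 (hv i j)

lemma measure_rank_eq_of_perm_invariant
    (hinv : ∀ σ : Equiv.Perm ι, μ.map (fun v => v ∘ σ) = μ) (p : ℕ → Prop) (i j : ι) :
    μ {v | p (rank v i)} = μ {v | p (rank v j)} := by
  classical
  have hswap : {v : ι → ℝ | p (rank v i)}
      = (fun v => v ∘ Equiv.swap i j) ⁻¹' {v | p (rank v j)} := by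
    ext v
    simp [rank_comp_perm]
  rw [hswap, ← Measure.map_apply (by fun_prop) (measurableSet_rank j p), hinv]

lemma card_mul_measure_rank_le [IsProbabilityMeasure μ]
    (hinv : ∀ σ : Equiv.Perm ι, μ.map (fun v => v ∘ σ) = μ)
    (hinj : ∀ᵐ v ∂μ, Function.Injective v) (p : ℕ → Prop) [DecidablePred p] (j : ι) :
    Fintype.card ι * μ {v | p (rank v j)} ≤ #{k ∈ Icc 1 (Fintype.card ι) | p k} :=
  calc (Fintype.card ι : ℝ≥0∞) * μ {v | p (rank v j)}
      = ∑ i, μ {v | p (rank v i)} := by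
        simp [measure_rank_eq_of_perm_invariant hinv p _ j]
    _ = ∫⁻ v, ∑ i, {v : ι → ℝ | p (rank v i)}.indicator 1 v ∂μ := by
        rw [lintegral_finsetSum _ fun i _ => measurable_one.indicator (measurableSet_rank i p)]
        simp [lintegral_indicator_one (measurableSet_rank _ p)]
    _ ≤ ∫⁻ _, (#{k ∈ Icc 1 (Fintype.card ι) | p k} : ℝ≥0∞) ∂μ := by
        refine lintegral_mono_ae ?_
        filter_upwards [hinj] with v hv
        simp only [Set.indicator_apply, Set.mem_ofPred_eq, Pi.one_apply]
        rw [← natCast_card_filter]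
        exact_mod_cast card_filter_rank_le hv p
    _ = #{k ∈ Icc 1 (Fintype.card ι) | p k} := by simp

end Exchangeable

lemma card_filter_lt_Icc_le (t : ℝ) (N : ℕ) :
    (#{k ∈ Icc 1 N | t < ((k : ℕ) : ℝ)} : ℝ≥0∞) ≤ ENNReal.ofReal (N - t + 1) := by
  have hsub : {k ∈ Icc 1 N | t < ((k : ℕ) : ℝ)} ⊆ Icc (⌊t⌋₊ + 1) N := fun k hk => by
    simp only [mem_filter, mem_Icc] at hk ⊢
    exact ⟨(Nat.floor_lt' (by omega)).2 hk.2, hk.1.2⟩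
  have hcard : #{k ∈ Icc 1 N | t < ((k : ℕ) : ℝ)} ≤ N - ⌊t⌋₊ := by
    simpa using card_le_card hsub
  rw [← ENNReal.ofReal_natCast, ENNReal.ofReal_le_ofReal_iff']
  rcases le_or_gt ⌊t⌋₊ N with hle | hlt
  · left
    calc (#{k ∈ Icc 1 N | t < ((k : ℕ) : ℝ)} : ℝ) ≤ ((N - ⌊t⌋₊ : ℕ) : ℝ) := by exact_mod_cast hcard
      _ ≤ N - t + 1 := by rw [Nat.cast_sub hle]; linarith [Nat.lt_floor_add_one t]
  · right
    exact_mod_cast hcard.trans (by omega)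

lemma card_filter_lt_div_Icc_le (ε : ℝ) (N : ℕ) :
    (#{k ∈ Icc 1 N | ε < ((k : ℕ) : ℝ) / N} : ℝ≥0∞) ≤ N * ENNReal.ofReal (1 - ε + 1 / N) := by
  rcases N.eq_zero_or_pos with rfl | hN
  · simp
  have hN' : (0 : ℝ) < N := by exact_mod_cast hN
  calc (#{k ∈ Icc 1 N | ε < ((k : ℕ) : ℝ) / N} : ℝ≥0∞)
      = #{k ∈ Icc 1 N | ε * N < ((k : ℕ) : ℝ)} := by simp only [lt_div_iff₀ hN']
    _ ≤ ENNReal.ofReal (N - ε * N + 1) := card_filter_lt_Icc_le (ε * N) N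
    _ = N * ENNReal.ofReal (1 - ε + 1 / N) := by
        rw [← ENNReal.ofReal_natCast, ← ENNReal.ofReal_mul hN'.le]
        congr 1
        field_simp

end Conformal

open Conformal in
theorem conformal_pvalue_upper_bound_general
    {Ω : Type*} [MeasurableSpace Ω] (P : Measure Ω) [IsProbabilityMeasure P]
    (n : ℕ) (α : Fin (n + 1) → Ω → ℝ) (hmeas : ∀ i, Measurable (α i))
    (hexch : ∀ σ : Equiv.Perm (Fin (n + 1)),
      Measure.map (fun ω i => α (σ i) ω) P = Measure.map (fun ω i => α i ω) P)
    (hties : ∀ i j, i ≠ j → P {ω | α i ω = α j ω} = 0)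
    (ε : ℝ) :
    P {ω | (ε : ℝ) <
        ((Finset.univ.filter (fun i => α (Fin.last n) ω ≤ α i ω)).card : ℝ) / (n + 1)}
      ≤ ENNReal.ofReal (1 - ε + 1 / (n + 1)) := by
  set X : Ω → Fin (n + 1) → ℝ := fun ω i => α i ω
  have hX : Measurable X := measurable_pi_lambda _ hmeas
  have := Measure.isProbabilityMeasure_map (μ := P) hX.aemeasurable
  have hinv : ∀ σ : Equiv.Perm (Fin (n + 1)), (P.map X).map (fun v => v ∘ σ) = P.map X :=
    fun σ => by rw [Measure.map_map (by fun_prop) hX]; exact hexch σ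
  have hinj : ∀ᵐ v ∂P.map X, Function.Injective v := by
    refine ae_injective_of_ties_null fun i j hij => ?_
    rw [Measure.map_apply hX (measurableSet_eq_fun (measurable_pi_apply i) (measurable_pi_apply j))]
    exact hties i j hij
  have hevent : P {ω | ε < ((univ.filter fun i => α (Fin.last n) ω ≤ α i ω).card : ℝ) / (n + 1)}
      = P.map X {v | ε < (rank v (Fin.last n) : ℝ) / (n + 1)} :=
    (Measure.map_apply hX
      (measurableSet_rank (Fin.last n) fun k => ε < (k : ℝ) / (n + 1))).symm
  have key := card_mul_measure_rank_le hinv hinj (fun k => ε < (k : ℝ) / (n + 1)) (Fin.last n)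
  have hcount := card_filter_lt_div_Icc_le ε (n + 1)
  rw [Fintype.card_fin] at key
  push_cast at key hcount
  rw [hevent]
  exact (ENNReal.mul_le_mul_iff_right (by simp) (by simp)).1 (key.trans hcount)

/-- Upper (anti-conservativeness) bound of conformal prediction: for exchangeable
scores with a.s. no ties, the p-value event has probability at most `1 - ε + 1/(n+1)`. -/
theorem conformal_pvalue_upper_bound
    {Ω : Type*} [MeasurableSpace Ω] (P : Measure Ω) [IsProbabilityMeasure P]
    (n : ℕ) (α : Fin (n + 1) → Ω → ℝ) (hmeas : ∀ i, Measurable (α i))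
    (hexch : ∀ σ : Equiv.Perm (Fin (n + 1)),
      Measure.map (fun ω i => α (σ i) ω) P = Measure.map (fun ω i => α i ω) P)
    (hties : ∀ i j, i ≠ j → P {ω | α i ω = α j ω} = 0)
    (ε : ℝ) (hε0 : 0 < ε) (hε1 : ε < 1) :
    P {ω | (ε : ℝ) <
        ((Finset.univ.filter (fun i => α (Fin.last n) ω ≤ α i ω)).card : ℝ) / (n + 1)}
      ≤ ENNReal.ofReal (1 - ε + 1 / (n + 1)) :=
  conformal_pvalue_upper_bound_general P n α hmeas hexch hties ε
end

section
/- Let Z_1,...,Z_{n+1} be i.i.d. real-valued random variables and let q̂ be the ⌈(1-ε)(n+1)⌉-th smallest value among Z_1,...,Z_n (assume ⌈(1-ε)(n+1)⌉ ≤ n). Then P(Z_{n+1} ≤ q̂) ≥ 1 - ε. -/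
open MeasureTheory ProbabilityTheory Finset
open scoped ENNReal

/-!
Put `x = (Z₀, …, Zₙ)` and let the strict rank of a coordinate be the number of coordinates
strictly below it. Then `Zₙ ≤ q̂` says exactly that the strict rank of `Zₙ` is at most `k - 1`,
where `k = ⌈(1-ε)(n+1)⌉`. Whatever `x` is, at least `k` of its coordinates have strict rank
`≤ k - 1` (ties only lower ranks), and since the i.i.d. law of `x` is invariant under
permutations of the coordinates, each coordinate has this property with the same probability
`p`. Summing over the coordinates gives `(n+1) p ≥ k ≥ (1-ε)(n+1)`.
-/

namespace List

variable {α : Type*} [LinearOrder α]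

theorem le_getElem_iff_countP_lt_le {s : List α} (hs : s.Pairwise (· ≤ ·)) {m : ℕ}
    (hm : m < s.length) (t : α) : t ≤ s[m] ↔ s.countP (· < t) ≤ m := by
  induction s generalizing m with
  | nil => simp at hm
  | cons a s ih =>
    obtain ⟨ha, hs⟩ := pairwise_cons.mp hs
    cases m with
    | zero =>
      simp only [getElem_cons_zero, countP_cons, nonpos_iff_eq_zero, Nat.add_eq_zero_iff,
        countP_eq_zero, decide_eq_true_eq, not_lt, ite_eq_right_iff, one_ne_zero, imp_false]
      exact ⟨fun hta => ⟨fun x hx => hta.trans (ha x hx), hta⟩, And.right⟩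
    | succ m =>
      have hm : m < s.length := by simpa using hm
      simp only [getElem_cons_succ, countP_cons, ih hs hm]
      by_cases hat : a < t
      · simp [hat]
      · have hts : t ≤ s[m] := (not_lt.mp hat).trans (ha _ (getElem_mem hm))
        have hcount := (ih hs hm).mp hts
        simp [hat, hcount, hcount.trans m.le_succ]

theorem countP_ofFn_lt {n : ℕ} (f : Fin n → α) (t : α) :
    (ofFn f).countP (· < t) = #{i | f i < t} := by
  induction n with
  | zero => simp
  | succ n ih =>
    simp only [ofFn_succ, countP_cons, ih, Fin.card_filter_univ_succ]
    split_ifs <;> simp_all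

end List

section StrictRank

variable {ι α : Type*} [Fintype ι] [LinearOrder α]

def strictRank (x : ι → α) (j : ι) : ℕ := #{i | x i < x j}

theorem strictRank_comp_equiv (x : ι → α) (σ : ι ≃ ι) (j : ι) :
    strictRank (x ∘ σ) j = strictRank x (σ j) :=
  card_equiv σ (by simp)

theorem le_card_filter_strictRank_le (x : ι → α) {m : ℕ} (hm : m < Fintype.card ι) :
    m + 1 ≤ #{j | strictRank x j ≤ m} := by
  classical
  set T : Finset ι := {j | strictRank x j ≤ m}
  by_contra! hT
  have hTc : Tᶜ.Nonempty := by
    rw [← card_pos, card_compl]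
    omega
  obtain ⟨j, hjT, hmin⟩ := exists_min_image Tᶜ x hTc
  -- everything strictly below the minimum of `x` off `T` lies in `T`, so `j` has rank `≤ #T ≤ m`
  have hsub : ({i | x i < x j} : Finset ι) ⊆ T := fun i hi => by
    by_contra hiT
    exact (hmin i (mem_compl.mpr hiT)).not_gt (mem_filter.mp hi).2
  exact mem_compl.mp hjT (mem_filter.mpr ⟨mem_univ j, (card_le_card hsub).trans (by omega)⟩)

theorem le_getD_mergeSort_iff_strictRank_le {n m : ℕ} (hm : m < n) (x : Fin (n + 1) → α)
    (d : α) :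
    x (Fin.last n) ≤ ((List.ofFn fun i : Fin n => x i.castSucc).mergeSort (· ≤ ·)).getD m d ↔
      strictRank x (Fin.last n) ≤ m := by
  set l := List.ofFn fun i : Fin n => x i.castSucc
  have hlen : m < (l.mergeSort (· ≤ ·)).length := by simpa [l] using hm
  have hcard : strictRank x (Fin.last n) = l.countP (· < x (Fin.last n)) := by
    rw [List.countP_ofFn_lt, strictRank, card_filter, card_filter, Fin.sum_univ_castSucc]
    simp
  rw [List.getD_eq_getElem _ _ hlen,
    List.le_getElem_iff_countP_lt_le (List.pairwise_mergeSort' _ l) hlen,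
    ((List.mergeSort_perm l _).countP_eq _), hcard]

end StrictRank

section Exchangeability

variable {ι α : Type*} [Fintype ι] [MeasurableSpace α]

theorem measurePreserving_comp_equiv (μ : Measure α) [SigmaFinite μ] (σ : ι ≃ ι) :
    MeasurePreserving (fun x : ι → α => x ∘ σ) (Measure.pi fun _ => μ)
      (Measure.pi fun _ => μ) := by
  convert measurePreserving_piCongrLeft (fun _ : ι => μ) σ.symm using 1
  ext x i
  simpa using (MeasurableEquiv.piCongrLeft_apply_apply σ.symm (β := fun _ => α) x (σ i)).symm

theorem natCast_mul_measure_univ_le_sum_measure (μ : Measure α) {A : ι → Set α}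
    [∀ a, DecidablePred fun j => a ∈ A j] (hA : ∀ j, MeasurableSet (A j)) {c : ℕ}
    (hc : ∀ a, c ≤ #{j | a ∈ A j}) :
    c * μ Set.univ ≤ ∑ j, μ (A j) := by
  calc (c : ℝ≥0∞) * μ Set.univ = ∫⁻ _, (c : ℝ≥0∞) ∂μ := by simp
    _ ≤ ∫⁻ a, ∑ j, (A j).indicator 1 a ∂μ := lintegral_mono fun a => by
      have := hc a
      rw [card_filter] at this
      simp only [Set.indicator_apply, Pi.one_apply]
      exact_mod_cast this
    _ = ∑ j, μ (A j) := by
      rw [lintegral_finsetSum _ fun j _ => measurable_one.indicator (hA j)]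
      simp_rw [lintegral_indicator_one (hA _)]

variable [LinearOrder α] [TopologicalSpace α] [OrderClosedTopology α]
  [SecondCountableTopology α] [OpensMeasurableSpace α]

theorem measurable_strictRank (j : ι) : Measurable fun x : ι → α => strictRank x j := by
  simp_rw [strictRank, card_filter]
  exact Finset.measurable_sum _ fun i _ => Measurable.ite
    (measurableSet_lt (measurable_pi_apply i) (measurable_pi_apply j)) measurable_const
    measurable_const

theorem measure_pi_strictRank_le_eq (μ : Measure α) [SigmaFinite μ] (m : ℕ) (j j' : ι) :
    Measure.pi (fun _ : ι => μ) {x | strictRank x j ≤ m} =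
      Measure.pi (fun _ : ι => μ) {x | strictRank x j' ≤ m} := by
  classical
  have hpre : (fun x : ι → α => x ∘ Equiv.swap j j') ⁻¹' {x | strictRank x j' ≤ m} =
      {x | strictRank x j ≤ m} := by
    ext x
    simp [strictRank_comp_equiv]
  have hA : MeasurableSet {x : ι → α | strictRank x j' ≤ m} :=
    measurable_strictRank j' measurableSet_Iic
  rw [← hpre, (measurePreserving_comp_equiv μ _).measure_preimage hA.nullMeasurableSet]

theorem natCast_add_one_le_card_mul_measure_pi (μ : Measure α) [IsProbabilityMeasure μ]
    {m : ℕ} (hm : m < Fintype.card ι) (j : ι) :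
    (m + 1 : ℝ≥0∞) ≤ Fintype.card ι * Measure.pi (fun _ : ι => μ) {x | strictRank x j ≤ m} := by
  have hcover := natCast_mul_measure_univ_le_sum_measure (Measure.pi fun _ : ι => μ)
    (A := fun j => {x | strictRank x j ≤ m}) (fun j => measurable_strictRank j measurableSet_Iic)
    (fun x => le_card_filter_strictRank_le x hm)
  simpa [measure_pi_strictRank_le_eq μ m _ j] using hcover

end Exchangeability

theorem ENNReal.one_sub_ofReal_le_of_natCast_le_mul {ε : ℝ} (hε : 0 ≤ ε) {n k : ℕ}
    (hk : (1 - ε) * (n + 1) ≤ k) {p : ℝ≥0∞} (hp : (k : ℝ≥0∞) ≤ (n + 1) * p) :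
    1 - ENNReal.ofReal ε ≤ p := by
  rw [← ENNReal.ofReal_one, ← ENNReal.ofReal_sub _ hε]
  refine (ENNReal.mul_le_mul_iff_right (a := n + 1) (by simp) (by simp)).mp ?_
  calc ((n : ℝ≥0∞) + 1) * ENNReal.ofReal (1 - ε) = ENNReal.ofReal ((1 - ε) * (n + 1)) := by
        rw [mul_comm, ENNReal.ofReal_mul' (by positivity)]; norm_cast
    _ ≤ k := ENNReal.ofReal_le_of_le_toReal (by simpa using hk)
    _ ≤ (n + 1) * p := hp

/-- Split conformal quantile lemma: the `⌈(1-ε)(n+1)⌉`-th smallest of `n` i.i.d. draws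
covers a fresh i.i.d. draw with probability at least `1-ε`. -/
theorem split_conformal_coverage_lower
    {Ω : Type*} [MeasurableSpace Ω] (P : Measure Ω) [IsProbabilityMeasure P]
    (n : ℕ) (Z : Fin (n + 1) → Ω → ℝ) (hmeas : ∀ i, Measurable (Z i))
    (hindep : iIndepFun Z P)
    (hident : ∀ i j, Measure.map (Z i) P = Measure.map (Z j) P)
    (ε : ℝ) (hε0 : 0 < ε) (hε1 : ε < 1)
    (hk : ⌈(1 - ε) * (n + 1)⌉₊ ≤ n) :
    1 - ENNReal.ofReal ε ≤
      P {ω | Z (Fin.last n) ω ≤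
        ((List.ofFn (fun i : Fin n => Z i.castSucc ω)).mergeSort (· ≤ ·)).getD
          (⌈(1 - ε) * (n + 1)⌉₊ - 1) 0} := by
  set k := ⌈(1 - ε) * (n + 1)⌉₊
  have hk_pos : 0 < k := Nat.ceil_pos.mpr (mul_pos (by linarith) (by positivity))
  set μ := P.map (Z (Fin.last n))
  have : IsProbabilityMeasure μ := Measure.isProbabilityMeasure_map (hmeas _).aemeasurable
  have hlaw : P.map (fun ω i => Z i ω) = Measure.pi fun _ => μ := by
    rw [(iIndepFun_iff_map_fun_eq_pi_map fun i => (hmeas i).aemeasurable).mp hindep]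
    simp_rw [μ, hident _ (Fin.last n)]
  set A := {x : Fin (n + 1) → ℝ | strictRank x (Fin.last n) ≤ k - 1}
  have hA : MeasurableSet A := measurable_strictRank _ measurableSet_Iic
  have hevent : {ω | Z (Fin.last n) ω ≤
      ((List.ofFn (fun i : Fin n => Z i.castSucc ω)).mergeSort (· ≤ ·)).getD (k - 1) 0} =
      (fun ω i => Z i ω) ⁻¹' A :=
    Set.ext fun ω => le_getD_mergeSort_iff_strictRank_le (by omega) (fun i => Z i ω) 0
  have hcover : (k : ℝ≥0∞) ≤ (n + 1) * Measure.pi (fun _ => μ) A := by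
    rw [← Nat.sub_add_cancel hk_pos]
    simpa using natCast_add_one_le_card_mul_measure_pi μ (m := k - 1)
      (by rw [Fintype.card_fin]; omega) (Fin.last n)
  rw [hevent, ← Measure.map_apply (measurable_pi_lambda _ hmeas) hA, hlaw]
  exact ENNReal.one_sub_ofReal_le_of_natCast_le_mul hε0.le (Nat.le_ceil _) hcover
end

section
/- Let Z_1,...,Z_{n+1} be i.i.d. real-valued random variables with a continuous distribution, and let q̂ be the ⌈(1-ε)(n+1)⌉-th smallest among Z_1,...,Z_n (assume ⌈(1-ε)(n+1)⌉ ≤ n). Then P(Z_{n+1} ≤ q̂) ≤ 1 - ε + 1/(n+1). -/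
/-!
Almost surely the `n + 1` scores are pairwise distinct, and then `Z (last n) ≤ q̂` forces
the rank of `Z (last n)` among all `n + 1` scores to be at most `k = ⌈(1 - ε)(n + 1)⌉`.
The joint law is exchangeable, so every coordinate takes a given rank with the same
probability, while distinct coordinates have distinct ranks; hence each rank has probability
at most `1 / (n + 1)`, and the coverage is at most `k / (n + 1) ≤ 1 - ε + 1 / (n + 1)`.
-/

open MeasureTheory ProbabilityTheory Finset Function
open scoped ENNReal

lemma card_filter_eq_countP_ofFn {β : Type*} {n : ℕ} (f : Fin n → β) (p : β → Prop)
    [DecidablePred p] : #{i | p (f i)} = (List.ofFn f).countP (fun b => decide (p b)) := by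
  rw [← Multiset.coe_countP, ← Fin.univ_val_map, Multiset.countP_map]
  rfl

section Rank

variable {ι α : Type*} [Fintype ι] [LinearOrder α]

def coordRank (x : ι → α) (i : ι) : ℕ := #{j | x j ≤ x i}

lemma one_le_coordRank (x : ι → α) (i : ι) : 1 ≤ coordRank x i :=
  card_pos.2 ⟨i, by simp⟩

lemma coordRank_lt_coordRank {x : ι → α} {i j : ι} (h : x i < x j) :
    coordRank x i < coordRank x j := by
  refine card_lt_card ⟨fun a ha => ?_, fun hsub => ?_⟩
  · simp only [mem_filter, mem_univ, true_and] at ha ⊢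
    exact ha.trans h.le
  · have hj : x j ≤ x i := by simpa using @hsub j (by simp)
    exact hj.not_gt h

lemma coordRank_injective {x : ι → α} (hx : Injective x) : Injective (coordRank x) := by
  intro i j h
  by_contra hne
  rcases (hx.ne hne).lt_or_gt with hlt | hlt
  · exact (coordRank_lt_coordRank hlt).ne h
  · exact (coordRank_lt_coordRank hlt).ne' h

lemma coordRank_comp_perm (x : ι → α) (σ : Equiv.Perm ι) (i : ι) :
    coordRank (x ∘ σ) i = coordRank x (σ i) :=
  card_equiv σ (by simp)

lemma countP_lt_le_of_le_getElem {S : List α} (hS : S.Pairwise (· ≤ ·)) {m : ℕ}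
    (hm : m < S.length) {c : α} (hc : c ≤ S[m]) : S.countP (· < c) ≤ m := by
  have hdrop : (S.drop m).countP (· < c) = 0 := by
    have hsorted := hS.sublist (S.drop_sublist m)
    rw [List.drop_eq_getElem_cons hm, List.pairwise_cons] at hsorted
    rw [List.countP_eq_zero, List.drop_eq_getElem_cons hm]
    intro a ha
    rcases List.mem_cons.1 ha with rfl | ha
    · simpa using hc
    · simpa using hc.trans (hsorted.1 a ha)
  calc S.countP (· < c) = (S.take m).countP (· < c) + (S.drop m).countP (· < c) := by
        rw [← List.countP_append, List.take_append_drop]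
    _ ≤ (S.take m).length := by rw [hdrop, add_zero]; exact List.countP_le_length
    _ ≤ m := by simp

lemma coordRank_last_eq {n : ℕ} {x : Fin (n + 1) → α} (hx : Injective x) :
    coordRank x (Fin.last n) = #{i : Fin n | x i.castSucc < x (Fin.last n)} + 1 := by
  have hlt : ∀ i : Fin n, x i.castSucc ≤ x (Fin.last n) ↔ x i.castSucc < x (Fin.last n) :=
    fun i => (hx.ne (Fin.castSucc_lt_last i).ne).le_iff_lt
  simp only [coordRank, card_filter, Fin.sum_univ_castSucc, hlt, le_refl, if_true]

lemma coordRank_last_le_of_le_orderStatistic {n k : ℕ} {x : Fin (n + 1) → α}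
    (hx : Injective x) (hk : 1 ≤ k) (hkn : k ≤ n) (d : α)
    (h : x (Fin.last n) ≤
      ((List.ofFn fun i : Fin n => x i.castSucc).mergeSort (· ≤ ·)).getD (k - 1) d) :
    coordRank x (Fin.last n) ≤ k := by
  set S := (List.ofFn fun i : Fin n => x i.castSucc).mergeSort (· ≤ ·)
  have hlen : k - 1 < S.length := by
    simp only [S, List.length_mergeSort, List.length_ofFn]
    omega
  rw [List.getD_eq_getElem _ _ hlen] at h
  have hbelow := countP_lt_le_of_le_getElem (List.pairwise_mergeSort' (· ≤ ·) _) hlen h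
  rw [(List.mergeSort_perm _ _).countP_eq, ← card_filter_eq_countP_ofFn] at hbelow
  rw [coordRank_last_eq hx]
  omega

end Rank

lemma ProbabilityTheory.IndepFun.ae_ne {Ω α : Type*} [MeasurableSpace Ω] [MeasurableSpace α]
    [MeasurableEq α] {P : Measure Ω} [IsFiniteMeasure P] {X Y : Ω → α} (hXY : IndepFun X Y P)
    (hX : AEMeasurable X P) (hY : AEMeasurable Y P) [NullSingletonClass (P.map Y)] :
    ∀ᵐ ω ∂P, X ω ≠ Y ω := by
  have hdiag : MeasurableSet {p : α × α | p.1 = p.2} := measurableSet_diagonal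
  rw [ae_iff]
  simp only [not_not]
  change P ((fun ω => (X ω, Y ω)) ⁻¹' {p | p.1 = p.2}) = 0
  rw [← Measure.map_apply_of_aemeasurable (hX.prodMk hY) hdiag,
    (indepFun_iff_map_prod_eq_prod_map_map hX hY).1 hXY, Measure.prod_apply hdiag]
  simp [Set.preimage, measure_singleton]

section Exchangeable

variable {ι α : Type*} [Fintype ι] [MeasurableSpace α]

def MeasureTheory.Measure.IsExchangeable (ν : Measure (ι → α)) : Prop :=
  ∀ σ : Equiv.Perm ι, ν.map (· ∘ σ) = ν

lemma MeasureTheory.Measure.isExchangeable_pi (μ : Measure α) [SigmaFinite μ] :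
    (Measure.pi fun _ : ι => μ).IsExchangeable := by
  intro σ
  convert (measurePreserving_piCongrLeft (fun _ : ι => μ) σ.symm).map_eq using 2
  ext x i
  simp [MeasurableEquiv.coe_piCongrLeft, Equiv.piCongrLeft_apply]

lemma ae_injective_pi [MeasurableEq α] (μ : Measure α) [IsProbabilityMeasure μ]
    [NullSingletonClass μ] :
    ∀ᵐ x ∂(Measure.pi fun _ : ι => μ), Injective x := by
  have hindep : iIndepFun (fun i (x : ι → α) => x i) (Measure.pi fun _ => μ) :=
    iIndepFun_pi (X := fun _ => id) fun _ => aemeasurable_id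
  simp_rw [injective_iff_pairwise_ne, Pairwise, ae_all_iff]
  intro i j hij
  have : NullSingletonClass ((Measure.pi fun _ : ι => μ).map (fun x => x j)) := by
    rw [(measurePreserving_eval _ j).map_eq]
    infer_instance
  exact (hindep.indepFun hij).ae_ne (measurable_pi_apply i).aemeasurable
    (measurable_pi_apply j).aemeasurable

variable [LinearOrder α] [TopologicalSpace α] [OrderClosedTopology α]
  [SecondCountableTopology α] [OpensMeasurableSpace α] {ν : Measure (ι → α)}

lemma measurable_coordRank (i : ι) : Measurable fun x : ι → α => coordRank x i := by
  simp_rw [coordRank, card_filter]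
  exact Finset.measurable_sum _ fun j _ => Measurable.ite
    (measurableSet_le (measurable_pi_apply j) (measurable_pi_apply i)) measurable_const
    measurable_const

lemma measurableSet_coordRank_eq (i : ι) (j : ℕ) :
    MeasurableSet {x : ι → α | coordRank x i = j} :=
  measurable_coordRank i (measurableSet_singleton j)

lemma measure_coordRank_eq_eq (hν : ν.IsExchangeable) (i i' : ι) (j : ℕ) :
    ν {x | coordRank x i = j} = ν {x | coordRank x i' = j} := by
  classical
  have hswap : (fun x : ι → α => x ∘ Equiv.swap i i') ⁻¹' {x | coordRank x i' = j} =
      {x | coordRank x i = j} := by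
    ext x
    simp [coordRank_comp_perm]
  rw [← hswap, ← Measure.map_apply (by fun_prop) (measurableSet_coordRank_eq i' j),
    hν (Equiv.swap i i')]

lemma measure_coordRank_eq_le [IsProbabilityMeasure ν] (hν : ν.IsExchangeable)
    (hinj : ∀ᵐ x ∂ν, Injective x) (i : ι) (j : ℕ) :
    ν {x | coordRank x i = j} ≤ (Fintype.card ι : ℝ≥0∞)⁻¹ := by
  have hdisj :
      Set.Pairwise (univ : Finset ι) (AEDisjoint ν on fun i' => {x | coordRank x i' = j}) :=
    fun a _ b _ hab => measure_mono_null
      (fun x hx hx' => hab (coordRank_injective hx' (hx.1.trans hx.2.symm))) (ae_iff.1 hinj)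
  rw [ENNReal.le_inv_iff_mul_le]
  calc ν {x | coordRank x i = j} * Fintype.card ι = ∑ i', ν {x | coordRank x i' = j} := by
        simp [measure_coordRank_eq_eq hν _ i, mul_comm]
    _ ≤ ν Set.univ := sum_measure_le_measure_univ
        (fun i' _ => (measurableSet_coordRank_eq i' j).nullMeasurableSet) hdisj
    _ = 1 := measure_univ

lemma measure_coordRank_le_le [IsProbabilityMeasure ν] (hν : ν.IsExchangeable)
    (hinj : ∀ᵐ x ∂ν, Injective x) (i : ι) (k : ℕ) :
    ν {x | coordRank x i ≤ k} ≤ k / Fintype.card ι :=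
  calc ν {x | coordRank x i ≤ k} ≤ ν (⋃ j ∈ Icc 1 k, {x | coordRank x i = j}) :=
        measure_mono fun x hx =>
          Set.mem_iUnion₂.2 ⟨_, mem_Icc.2 ⟨one_le_coordRank x i, hx⟩, rfl⟩
    _ ≤ ∑ j ∈ Icc 1 k, ν {x | coordRank x i = j} := measure_biUnion_finset_le _ _
    _ ≤ ∑ _j ∈ Icc 1 k, (Fintype.card ι : ℝ≥0∞)⁻¹ :=
        sum_le_sum fun j _ => measure_coordRank_eq_le hν hinj i j
    _ = k / Fintype.card ι := by simp [div_eq_mul_inv]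

end Exchangeable

lemma natCeil_mul_div_le {a : ℝ} (ha : 0 ≤ a) (n : ℕ) :
    (⌈a * (n + 1)⌉₊ : ℝ≥0∞) / (n + 1) ≤ ENNReal.ofReal (a + 1 / (n + 1)) := by
  have hn : (0 : ℝ) < n + 1 := by positivity
  have hceil := Nat.ceil_lt_add_one (mul_nonneg ha hn.le)
  have hcast : ((n : ℝ≥0∞) + 1) = ENNReal.ofReal (n + 1) :=
    mod_cast (ENNReal.ofReal_natCast (n + 1)).symm
  rw [← ENNReal.ofReal_natCast, hcast, ← ENNReal.ofReal_div_of_pos hn]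
  refine ENNReal.ofReal_le_ofReal ((div_le_iff₀ hn).2 ?_)
  rw [add_mul, one_div_mul_cancel hn.ne']
  linarith

theorem split_conformal_coverage_upper_general
    {Ω : Type*} [MeasurableSpace Ω] (P : Measure Ω) [IsProbabilityMeasure P]
    (n : ℕ) (Z : Fin (n + 1) → Ω → ℝ) (hmeas : ∀ i, Measurable (Z i))
    (hindep : iIndepFun Z P)
    (hident : ∀ i j, Measure.map (Z i) P = Measure.map (Z j) P)
    (hcont : ∀ i, NoAtoms (Measure.map (Z i) P))
    (ε : ℝ) (hε1 : ε < 1)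
    (hk : ⌈(1 - ε) * (n + 1)⌉₊ ≤ n) :
    P {ω | Z (Fin.last n) ω ≤
        ((List.ofFn (fun i : Fin n => Z i.castSucc ω)).mergeSort (· ≤ ·)).getD
          (⌈(1 - ε) * (n + 1)⌉₊ - 1) 0}
      ≤ ENNReal.ofReal (1 - ε + 1 / (n + 1)) := by
  set k := ⌈(1 - ε) * (n + 1)⌉₊
  have hk1 : 1 ≤ k := Nat.ceil_pos.2 (mul_pos (by linarith) (by positivity))
  set μ := P.map (Z (Fin.last n))
  have : IsProbabilityMeasure μ := Measure.isProbabilityMeasure_map (hmeas _).aemeasurable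
  have : NullSingletonClass μ := hcont _
  have hlaw : P.map (fun ω i => Z i ω) = Measure.pi fun _ => μ := by
    rw [hindep.map_fun_eq_pi_map fun i => (hmeas i).aemeasurable]
    simp_rw [hident _ (Fin.last n)]
    rfl
  have hinj := ae_injective_pi (ι := Fin (n + 1)) μ
  calc P {ω | Z (Fin.last n) ω ≤
        ((List.ofFn (fun i : Fin n => Z i.castSucc ω)).mergeSort (· ≤ ·)).getD (k - 1) 0}
      ≤ P ((fun ω i => Z i ω) ⁻¹' {x | Injective x → coordRank x (Fin.last n) ≤ k}) :=
        measure_mono fun ω hω hx => coordRank_last_le_of_le_orderStatistic hx hk1 hk 0 hω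
    _ ≤ (Measure.pi fun _ => μ) {x | Injective x → coordRank x (Fin.last n) ≤ k} :=
        hlaw ▸ Measure.le_map_apply (measurable_pi_lambda _ hmeas).aemeasurable _
    _ ≤ (Measure.pi fun _ => μ) {x | coordRank x (Fin.last n) ≤ k} :=
        measure_mono_ae (hinj.mono fun x hx h => h hx)
    _ ≤ k / (n + 1) := by
        simpa using measure_coordRank_le_le (Measure.isExchangeable_pi μ) hinj (Fin.last n) k
    _ ≤ ENNReal.ofReal (1 - ε + 1 / (n + 1)) := natCeil_mul_div_le (by linarith) n

/-- Upper bound of split conformal coverage for i.i.d. draws from a continuous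
(atomless) distribution. -/
theorem split_conformal_coverage_upper
    {Ω : Type*} [MeasurableSpace Ω] (P : Measure Ω) [IsProbabilityMeasure P]
    (n : ℕ) (Z : Fin (n + 1) → Ω → ℝ) (hmeas : ∀ i, Measurable (Z i))
    (hindep : iIndepFun Z P)
    (hident : ∀ i j, Measure.map (Z i) P = Measure.map (Z j) P)
    (hcont : ∀ i, NoAtoms (Measure.map (Z i) P))
    (ε : ℝ) (hε0 : 0 < ε) (hε1 : ε < 1)
    (hk : ⌈(1 - ε) * (n + 1)⌉₊ ≤ n) :
    P {ω | Z (Fin.last n) ω ≤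
        ((List.ofFn (fun i : Fin n => Z i.castSucc ω)).mergeSort (· ≤ ·)).getD
          (⌈(1 - ε) * (n + 1)⌉₊ - 1) 0}
      ≤ ENNReal.ofReal (1 - ε + 1 / (n + 1)) :=
  split_conformal_coverage_upper_general P n Z hmeas hindep hident hcont ε hε1 hk
end

section
/- The tempered-softmax distribution p(T) with p_i(T) = exp(s_i/T)/Σ_j exp(s_j/T) has Shannon entropy H(p(T)) = -Σ_i p_i(T) log p_i(T) that is nondecreasing in T for T > 0, given fixed real scores s_1,...,s_K. -/
/-!
Put `β = 1 / T` and `M k β = ∑ i, exp (β sᵢ) sᵢ ^ k`, so that `M 0` is the partition function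
and `M (k + 1)` is the derivative of `M k`. The entropy of the Gibbs distribution is
`H β = log (M 0) - β M 1 / M 0`, with derivative `-β (M 0 M 2 - M 1 ^ 2) / M 0 ^ 2`.
The bracket is `M 0 ^ 2` times the variance of `s` under the Gibbs distribution, nonnegative by
Cauchy–Schwarz, so `H` is antitone for `β ≥ 0` and `T ↦ H (1 / T)` is monotone for `T > 0`.
-/

open Finset Real

section Gibbs

variable {ι : Type*} [Fintype ι] (s : ι → ℝ)

noncomputable def gibbsMoment (k : ℕ) (β : ℝ) : ℝ := ∑ i, exp (β * s i) * s i ^ k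

noncomputable def gibbsEntropy (β : ℝ) : ℝ :=
  log (gibbsMoment s 0 β) - β * gibbsMoment s 1 β / gibbsMoment s 0 β

lemma gibbsMoment_zero_pos [Nonempty ι] (β : ℝ) : 0 < gibbsMoment s 0 β := by
  simpa [gibbsMoment] using sum_pos (fun i _ => exp_pos (β * s i)) univ_nonempty

lemma hasDerivAt_gibbsMoment (k : ℕ) (β : ℝ) :
    HasDerivAt (gibbsMoment s k) (gibbsMoment s (k + 1) β) β := by
  have hterm (i : ι) : HasDerivAt (fun b => exp (b * s i) * s i ^ k)
      (exp (β * s i) * s i ^ (k + 1)) β := by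
    simpa [pow_succ, mul_assoc, mul_comm (s i)] using
      (hasDerivAt_mul_const (s i)).exp.mul_const (s i ^ k)
  exact HasDerivAt.fun_sum fun i _ => hterm i

lemma gibbsMoment_one_sq_le (β : ℝ) :
    gibbsMoment s 1 β ^ 2 ≤ gibbsMoment s 0 β * gibbsMoment s 2 β :=
  sum_sq_le_sum_mul_sum_of_sq_le_mul univ (fun i _ => by positivity) (fun i _ => by positivity)
    fun i _ => le_of_eq (by ring)

lemma hasDerivAt_gibbsEntropy [Nonempty ι] (β : ℝ) :
    HasDerivAt (gibbsEntropy s)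
      (-β * (gibbsMoment s 0 β * gibbsMoment s 2 β - gibbsMoment s 1 β ^ 2) /
        gibbsMoment s 0 β ^ 2) β := by
  have hM₀ := (gibbsMoment_zero_pos s β).ne'
  have hM₀' := hasDerivAt_gibbsMoment s 0 β
  have hM₁' := hasDerivAt_gibbsMoment s 1 β
  refine ((hM₀'.log hM₀).sub (((hasDerivAt_id' β).fun_mul hM₁').div hM₀' hM₀)).congr_deriv ?_
  field_simp
  ring

lemma antitoneOn_gibbsEntropy [Nonempty ι] : AntitoneOn (gibbsEntropy s) (Set.Ici 0) := by
  have hderiv := hasDerivAt_gibbsEntropy s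
  refine antitoneOn_of_deriv_nonpos (convex_Ici 0)
    (fun β _ => (hderiv β).continuousAt.continuousWithinAt)
    (fun β _ => (hderiv β).differentiableAt.differentiableWithinAt) fun β hβ => ?_
  rw [interior_Ici] at hβ
  rw [(hderiv β).deriv]
  have hvar := sub_nonneg.2 (gibbsMoment_one_sq_le s β)
  have hβ' : -β ≤ 0 := neg_nonpos.2 (le_of_lt hβ)
  exact div_nonpos_of_nonpos_of_nonneg (mul_nonpos_of_nonpos_of_nonneg hβ' hvar) (sq_nonneg _)

lemma neg_sum_softmax_mul_log_eq_gibbsEntropy [Nonempty ι] (T : ℝ) :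
    -∑ i, (exp (s i / T) / ∑ j, exp (s j / T)) * log (exp (s i / T) / ∑ j, exp (s j / T)) =
      gibbsEntropy s T⁻¹ := by
  have hZ : ∑ j, exp (s j / T) = gibbsMoment s 0 T⁻¹ := by
    simp [gibbsMoment, div_eq_inv_mul]
  have hZ₀ := (gibbsMoment_zero_pos s T⁻¹).ne'
  have hM₁ : ∑ j, exp (s j / T) * s j = gibbsMoment s 1 T⁻¹ := by
    simp [gibbsMoment, div_eq_inv_mul]
  simp_rw [hZ, log_div (exp_ne_zero _) hZ₀, log_exp]
  calc -∑ i, exp (s i / T) / gibbsMoment s 0 T⁻¹ * (s i / T - log (gibbsMoment s 0 T⁻¹))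
      = log (gibbsMoment s 0 T⁻¹) * ((∑ i, exp (s i / T)) / gibbsMoment s 0 T⁻¹)
          - T⁻¹ * (∑ i, exp (s i / T) * s i) / gibbsMoment s 0 T⁻¹ := by
        simp only [sum_div, mul_sum, ← sum_sub_distrib, ← sum_neg_distrib]
        exact sum_congr rfl fun i _ => by ring
    _ = gibbsEntropy s T⁻¹ := by rw [hZ, hM₁, div_self hZ₀, mul_one, gibbsEntropy]

end Gibbs

theorem tempered_softmax_entropy_monotone_general
    (K : ℕ) (s : Fin K → ℝ) :
    MonotoneOn (fun T : ℝ =>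
      -∑ i, (Real.exp (s i / T) / ∑ j, Real.exp (s j / T)) *
        Real.log (Real.exp (s i / T) / ∑ j, Real.exp (s j / T)))
      (Set.Ioi (0 : ℝ)) := by
  rcases isEmpty_or_nonempty (Fin K) with _ | _
  · simp [monotoneOn_const]
  intro a ha b hb hab
  simp only [neg_sum_softmax_mul_log_eq_gibbsEntropy]
  exact antitoneOn_gibbsEntropy s (Set.mem_Ici.2 (inv_nonneg.2 (le_of_lt hb)))
    (Set.mem_Ici.2 (inv_nonneg.2 (le_of_lt ha))) (inv_anti₀ ha hab)

/-- The Shannon entropy of the tempered softmax distribution is nondecreasing in the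
temperature `T > 0`. -/
theorem tempered_softmax_entropy_monotone
    (K : ℕ) (hK : 0 < K) (s : Fin K → ℝ) :
    MonotoneOn (fun T : ℝ =>
      -∑ i, (Real.exp (s i / T) / ∑ j, Real.exp (s j / T)) *
        Real.log (Real.exp (s i / T) / ∑ j, Real.exp (s j / T)))
      (Set.Ioi (0 : ℝ)) :=
  tempered_softmax_entropy_monotone_general K s
end
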